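/- Let Φ be the root system of type E₆ or E₇, with i = 1 for E₆ and i = 7 for E₇, and let W_i be the standard parabolic subgroup of the Weyl group generated by all simple reflections except s_i. Then for every root α ∈ Φ, the reflection s_α lies in W_i ∪ W_i s_i W_i. -/

import Mathlib

open scoped RealInnerProductSpace Pointwise

namespace Paper

variable {V : Type*} [NormedAddCommGroup V] [InnerProductSpace ℝ V]

/-- The orthogonal reflection in the hyperplane perpendicular to `α`
(by convention the identity if `α = 0`). -/
noncomputable def sref (α : V) : V ≃ₗ[ℝ] V :=
  letI := Classical.propDecidable (α = 0)
  if h : α = 0 then LinearEquiv.refl ℝ V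
  else
    Module.reflection (x := α) (f := (2 / ⟪α, α⟫) • (innerₛₗ ℝ α)) <| by
      have h' : ⟪α, α⟫ ≠ 0 := inner_self_ne_zero.mpr h
      have h2 : ((2 / ⟪α, α⟫) • (innerₛₗ ℝ α)) α = (2 / ⟪α, α⟫) * ⟪α, α⟫ := by
        simp
      rw [h2, div_mul_cancel₀ _ h']

/-- `Φ` is a (finite, reduced, crystallographic) root system in the real inner
product space `V`. -/
structure IsRootSystem (Φ : Set V) : Prop where
  finite : Φ.Finite
  nonzero : (0 : V) ∉ Φ
  span_top : Submodule.span ℝ Φ = ⊤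
  neg_mem : ∀ α ∈ Φ, -α ∈ Φ
  refl_mem : ∀ α ∈ Φ, ∀ β ∈ Φ, sref α β ∈ Φ
  crystallographic : ∀ α ∈ Φ, ∀ β ∈ Φ, ∃ m : ℤ, 2 * ⟪α, β⟫ / ⟪β, β⟫ = (m : ℝ)
  reduced : ∀ α ∈ Φ, ∀ t : ℝ, t • α ∈ Φ → t = 1 ∨ t = -1

/-- Irreducibility of a root system. -/
def IsIrreducible (Φ : Set V) : Prop :=
  ∀ Φ₁ Φ₂ : Set V, Φ = Φ₁ ∪ Φ₂ → (∀ α ∈ Φ₁, ∀ β ∈ Φ₂, ⟪α, β⟫ = 0) →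
    Φ₁ = ∅ ∨ Φ₂ = ∅

/-- `αs` is a system of simple roots for `Φ`, with corresponding set `Pos` of
positive roots. -/
structure IsBase {n : ℕ} (Φ : Set V) (αs : Fin n → V) (Pos : Set V) : Prop where
  mem : ∀ i, αs i ∈ Φ
  indep : LinearIndependent ℝ αs
  span_eq : Submodule.span ℝ (Set.range αs) = ⊤
  pos_subset : Pos ⊆ Φ
  mem_pos_iff : ∀ β ∈ Φ, (β ∈ Pos ↔ ∃ c : Fin n → ℕ, β = ∑ i, (c i : ℝ) • αs i)
  pos_or_neg : ∀ β ∈ Φ, β ∈ Pos ∨ -β ∈ Pos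

/-- The Weyl group of `Φ`: the subgroup of `GL(V)` generated by the reflections
in the roots. -/
noncomputable def weylGroup (Φ : Set V) : Subgroup (V ≃ₗ[ℝ] V) :=
  Subgroup.closure (sref '' Φ)

/-- The standard parabolic subgroup generated by the simple reflections `sref (αs i)`
for `i ∈ J`. -/
noncomputable def parab {n : ℕ} (αs : Fin n → V) (J : Set (Fin n)) :
    Subgroup (V ≃ₗ[ℝ] V) :=
  Subgroup.closure ((fun i => sref (αs i)) '' J)

/-- The inversion set `Φ(w) = {β ∈ Φ⁺ : w⁻¹ β ∈ −Φ⁺}`. -/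
def invSet (Pos : Set V) (w : V ≃ₗ[ℝ] V) : Set V :=
  {β ∈ Pos | -(w⁻¹ β) ∈ Pos}

/-- The length of a Weyl group element, as the number of inversions. -/
noncomputable def len (Pos : Set V) (w : V ≃ₗ[ℝ] V) : ℕ :=
  (invSet Pos w).ncard

/-- `φ` is the highest root of the positive system `Pos` with simple roots `αs`. -/
def IsHighestRoot {n : ℕ} (αs : Fin n → V) (Pos : Set V) (φ : V) : Prop :=
  φ ∈ Pos ∧ ∀ β ∈ Pos, ∃ c : Fin n → ℕ, φ - β = ∑ i, (c i : ℝ) • αs i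

/-- Adjacency in the Bourbaki-labelled Dynkin diagram of the `E`-series (nodes `1,…,8`). -/
def eAdj (i j : ℕ) : Prop :=
  (i, j) ∈ ([(1,3),(3,1),(3,4),(4,3),(4,5),(5,4),(5,6),(6,5),(6,7),(7,6),(7,8),(8,7),(2,4),(4,2)] :
    List (ℕ × ℕ))

instance (i j : ℕ) : Decidable (eAdj i j) := by unfold eAdj; infer_instance

/-- Cartan integers of the `E`-series (Bourbaki labelling, nodes `1,…,8`):
`E₆`, `E₇` and `E₈` are obtained by restricting to nodes `1,…,n`. -/
def cartanE (i j : ℕ) : ℝ :=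
  if i = j then 2 else if eAdj i j then -1 else 0

/-- Cartan integers of `F₄` (Bourbaki labelling, nodes `1,…,4`; `α₁, α₂` long,
`α₃, α₄` short), with the convention `C i j = 2(αᵢ,αⱼ)/(αⱼ,αⱼ)`. -/
def cartanF (i j : ℕ) : ℝ :=
  if i = j then 2 else
  if (i, j) ∈ ([(1,2),(2,1),(3,2),(3,4),(4,3)] : List (ℕ × ℕ)) then -1 else
  if (i, j) = (2,3) then -2 else 0

/-- Cartan integers of `Aₙ` (nodes `1,…,n`). -/
def cartanA (i j : ℕ) : ℝ :=
  if i = j then 2 else if i + 1 = j ∨ j + 1 = i then -1 else 0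

/-- The simple roots `αs` realise the Cartan matrix `C` (indexed by nodes `1,…,n`). -/
def CartanIs {n : ℕ} (αs : Fin n → V) (C : ℕ → ℕ → ℝ) : Prop :=
  ∀ i j : Fin n, 2 * ⟪αs i, αs j⟫ / ⟪αs j, αs j⟫ = C ((i : ℕ) + 1) ((j : ℕ) + 1)



/-! ### Basic lemmas about `sref` -/

lemma sref_apply (α : V) (h : α ≠ 0) (β : V) :
    sref α β = β - (2 * ⟪α, β⟫ / ⟪α, α⟫) • α := by
  rw [sref]
  rw [dif_neg h, Module.reflection_apply]
  congr 1
  simp [LinearMap.smul_apply, smul_smul]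
  ring_nf

lemma sref_zero_apply (x : V) : sref (0 : V) x = x := by
  rw [sref, dif_pos rfl]; rfl

lemma inner_sref (α x y : V) : ⟪sref α x, sref α y⟫ = ⟪x, y⟫ := by
  by_cases h : α = 0
  · rw [h, sref_zero_apply, sref_zero_apply]
  · have hαα : ⟪α, α⟫ ≠ 0 := inner_self_ne_zero.mpr h
    rw [sref_apply α h, sref_apply α h]
    simp only [inner_sub_left, inner_sub_right, real_inner_smul_left, real_inner_smul_right]
    rw [real_inner_comm x α, real_inner_comm y α]
    field_simp
    ring

lemma sref_sref (α x : V) : sref α (sref α x) = x := by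
  by_cases h : α = 0
  · rw [h, sref_zero_apply, sref_zero_apply]
  · have hαα : ⟪α, α⟫ ≠ 0 := inner_self_ne_zero.mpr h
    rw [sref_apply α h, sref_apply α h]
    rw [inner_sub_right, real_inner_smul_right]
    have hc : 2 * (⟪α, x⟫ - 2 * ⟪α, x⟫ / ⟪α, α⟫ * ⟪α, α⟫) / ⟪α, α⟫
        = -(2 * ⟪α, x⟫ / ⟪α, α⟫) := by field_simp; ring
    rw [hc, neg_smul, sub_neg_eq_add, sub_add_cancel]

lemma sref_neg (α : V) : sref (-α) = sref α := by
  by_cases h : α = 0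
  · rw [h, neg_zero]
  · have h' : (-α : V) ≠ 0 := neg_ne_zero.mpr h
    ext x
    rw [sref_apply _ h', sref_apply _ h]
    rw [inner_neg_left, inner_neg_neg]
    simp [mul_neg, neg_div, neg_smul, smul_neg, neg_neg]

lemma linequiv_inv_eq_symm (g : V ≃ₗ[ℝ] V) : g⁻¹ = g.symm := rfl

lemma sref_conj (g : V ≃ₗ[ℝ] V) (hg : ∀ x y : V, ⟪g x, g y⟫ = ⟪x, y⟫) (α : V) :
    sref (g α) = g * sref α * g⁻¹ := by
  by_cases h : α = 0
  · ext x
    simp only [h, map_zero]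
    rw [sref_zero_apply]
    show x = g (sref 0 (g⁻¹ x))
    rw [sref_zero_apply, linequiv_inv_eq_symm]
    exact (g.apply_symm_apply x).symm
  · have h' : g α ≠ 0 := fun hz => h (g.map_eq_zero_iff.mp hz)
    ext x
    rw [sref_apply _ h']
    show _ = g (sref α (g⁻¹ x))
    rw [sref_apply _ h, map_sub, map_smul, linequiv_inv_eq_symm]
    have h1 : ⟪g α, g α⟫ = ⟪α, α⟫ := hg α α
    have h2 : ⟪g α, x⟫ = ⟪α, g.symm x⟫ := by
      conv_lhs => rw [show x = g (g.symm x) from (g.apply_symm_apply x).symm]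
      exact hg _ _
    rw [h1, h2, g.apply_symm_apply]

lemma parab_inner {n : ℕ} (αs : Fin n → V) (J : Set (Fin n)) {w : V ≃ₗ[ℝ] V}
    (hw : w ∈ parab αs J) : ∀ x y : V, ⟪w x, w y⟫ = ⟪x, y⟫ := by
  induction hw using Subgroup.closure_induction with
  | mem g hg =>
    obtain ⟨j, _, rfl⟩ := hg
    exact inner_sref _
  | one => intro x y; rfl
  | mul g₁ g₂ _ _ h1 h2 =>
    intro x y
    show ⟪g₁ (g₂ x), g₁ (g₂ y)⟫ = _
    rw [h1, h2]
  | inv g _ hg =>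
    intro x y
    have := hg (g⁻¹ x) (g⁻¹ y)
    rw [linequiv_inv_eq_symm, g.apply_symm_apply, g.apply_symm_apply] at this
    exact this.symm


section Main

variable {n : ℕ} {Φ : Set V} {αs : Fin n → V} {Pos : Set V}

lemma inner_self_pos' {x : V} (hx : x ≠ 0) : 0 < ⟪x, x⟫ := by
  rw [real_inner_self_eq_norm_mul_norm]
  exact mul_pos (norm_pos_iff.mpr hx) (norm_pos_iff.mpr hx)

lemma repr_pos_nat (hbase : IsBase Φ αs Pos) (B : Module.Basis (Fin n) ℝ V) (hB : ∀ j, B j = αs j)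
    {β : V} (hβ : β ∈ Pos) : ∃ c : Fin n → ℕ, ∀ j, B.repr β j = (c j : ℝ) := by
  obtain ⟨c, hc⟩ := (hbase.mem_pos_iff β (hbase.pos_subset hβ)).mp hβ
  refine ⟨c, fun j => ?_⟩
  have hβeq : β = ∑ i, ((c i : ℝ)) • B i := by
    rw [hc]; exact Finset.sum_congr rfl (fun i _ => by rw [hB])
  rw [hβeq, B.repr_sum_self]

lemma repr_pos_nonneg (hbase : IsBase Φ αs Pos) (B : Module.Basis (Fin n) ℝ V) (hB : ∀ j, B j = αs j)
    {β : V} (hβ : β ∈ Pos) (j : Fin n) : 0 ≤ B.repr β j := by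
  obtain ⟨c, hc⟩ := repr_pos_nat hbase B hB hβ
  rw [hc j]; exact Nat.cast_nonneg _

lemma sum_repr_eq (B : Module.Basis (Fin n) ℝ V) (hB : ∀ j, B j = αs j) (v : V) :
    v = ∑ l, B.repr v l • αs l := by
  conv_lhs => rw [← B.sum_repr v]
  exact Finset.sum_congr rfl (fun l _ => by rw [hB])

lemma mem_pos_of_pos_coord (hbase : IsBase Φ αs Pos) (B : Module.Basis (Fin n) ℝ V)
    (hB : ∀ j, B j = αs j) {β : V} (hβ : β ∈ Φ) {j : Fin n} (hj : 0 < B.repr β j) :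
    β ∈ Pos := by
  rcases hbase.pos_or_neg β hβ with h | h
  · exact h
  · exfalso
    have := repr_pos_nonneg hbase B hB h j
    rw [map_neg] at this
    simp only [Finsupp.coe_neg, Pi.neg_apply] at this
    linarith

lemma exists_pos_inner (hΦ : IsRootSystem Φ) (hbase : IsBase Φ αs Pos)
    (B : Module.Basis (Fin n) ℝ V) (hB : ∀ j, B j = αs j) {β : V} (hβ : β ∈ Pos) :
    ∃ j, 0 < B.repr β j ∧ 0 < ⟪β, αs j⟫ := by
  by_contra hcon
  push_neg at hcon
  have hβ0 : β ≠ 0 := fun h => hΦ.nonzero (h ▸ hbase.pos_subset hβ)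
  have hpos : 0 < ⟪β, β⟫ := inner_self_pos' hβ0
  have hexp : ⟪β, β⟫ = ∑ l, B.repr β l * ⟪αs l, β⟫ := by
    nth_rw 1 [sum_repr_eq B hB β]
    rw [sum_inner]
    simp_rw [real_inner_smul_left]
  have hle : ∀ l ∈ Finset.univ, B.repr β l * ⟪αs l, β⟫ ≤ 0 := by
    intro l _
    rcases lt_or_eq_of_le (repr_pos_nonneg hbase B hB hβ l) with h | h
    · have := hcon l h
      rw [real_inner_comm]
      exact mul_nonpos_of_nonneg_of_nonpos (le_of_lt h) this
    · rw [← h, zero_mul]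
  have := Finset.sum_nonpos hle
  rw [← hexp] at this
  linarith

lemma descent (hΦ : IsRootSystem Φ) (hbase : IsBase Φ αs Pos)
    (B : Module.Basis (Fin n) ℝ V) (hB : ∀ j, B j = αs j) {β : V} (hβ : β ∈ Pos)
    (j : Fin n) (hj : 0 < ⟪β, αs j⟫) :
    β = αs j ∨ (sref (αs j) β ∈ Pos ∧
      (∀ l, l ≠ j → B.repr (sref (αs j) β) l = B.repr β l) ∧
      (∑ l, B.repr (sref (αs j) β) l) ≤ (∑ l, B.repr β l) - 1) := by
  have hβΦ := hbase.pos_subset hβ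
  have hαjΦ := hbase.mem j
  have hαj0 : αs j ≠ 0 := fun h => hΦ.nonzero (h ▸ hαjΦ)
  have hA : 0 < ⟪αs j, αs j⟫ := inner_self_pos' hαj0
  obtain ⟨m, hm⟩ := hΦ.crystallographic β hβΦ (αs j) hαjΦ
  have hp : (0:ℝ) < m := by rw [← hm]; positivity
  have hm1 : (1:ℝ) ≤ m := by exact_mod_cast (by exact_mod_cast hp : (0:ℤ) < m)
  have hβ'Φ : sref (αs j) β ∈ Φ := hΦ.refl_mem _ hαjΦ _ hβΦ
  have hm' : 2 * ⟪αs j, β⟫ / ⟪αs j, αs j⟫ = (m:ℝ) := by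
    rw [real_inner_comm]; exact hm
  have hform : sref (αs j) β = β - (m:ℝ) • αs j := by
    rw [sref_apply _ hαj0, hm']
  have hrepr : ∀ l, B.repr (sref (αs j) β) l
      = B.repr β l - (if j = l then (m:ℝ) else 0) := by
    intro l
    rw [hform, map_sub, map_smul]
    have : B.repr (αs j) = Finsupp.single j 1 := by rw [← hB j]; exact B.repr_self j
    simp [this, Finsupp.single_apply]
  rcases hbase.pos_or_neg _ hβ'Φ with hpos | hneg
  · right
    refine ⟨hpos, fun l hl => ?_, ?_⟩
    · rw [hrepr l, if_neg (fun h => hl h.symm), sub_zero]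
    · have : (∑ l, B.repr (sref (αs j) β) l) = (∑ l, B.repr β l) - (m:ℝ) := by
        rw [Finset.sum_congr rfl (fun l _ => hrepr l), Finset.sum_sub_distrib]
        congr 1
        rw [Finset.sum_ite_eq Finset.univ j (fun _ => (m:ℝ)), if_pos (Finset.mem_univ j)]
      rw [this]; linarith
  · left
    have hcoords : ∀ l, l ≠ j → B.repr β l = 0 := by
      intro l hl
      have h1 : 0 ≤ B.repr β l := repr_pos_nonneg hbase B hB hβ l
      have h2 := repr_pos_nonneg hbase B hB hneg l
      rw [map_neg] at h2
      simp only [Finsupp.coe_neg, Pi.neg_apply] at h2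
      have h3 := hrepr l
      rw [if_neg (fun h => hl h.symm), sub_zero] at h3
      linarith
    have hβeq : β = B.repr β j • αs j := by
      conv_lhs => rw [sum_repr_eq B hB β]
      rw [Finset.sum_eq_single j (fun l _ hl => by rw [hcoords l hl, zero_smul]) (by simp)]
    have := hΦ.reduced (αs j) hαjΦ (B.repr β j) (hβeq ▸ hβΦ)
    rcases this with h1 | h1
    · rw [hβeq, h1, one_smul]
    · exfalso
      have := repr_pos_nonneg hbase B hB hβ j
      rw [h1] at this; linarith


lemma base_nonzero_height (hΦ : IsRootSystem Φ) (hbase : IsBase Φ αs Pos)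
    (B : Module.Basis (Fin n) ℝ V) (hB : ∀ j, B j = αs j) {β : V} (hβ : β ∈ Pos) :
    ¬ ((∑ l, B.repr β l) ≤ (0:ℝ)) := by
  intro hle
  have hall : ∀ l ∈ Finset.univ, B.repr β l = 0 := by
    have hnn : ∀ l ∈ Finset.univ, (0:ℝ) ≤ B.repr β l :=
      fun l _ => repr_pos_nonneg hbase B hB hβ l
    intro l hl
    by_contra h0
    have h1 : 0 < B.repr β l := lt_of_le_of_ne (hnn l hl) (Ne.symm h0)
    have h2 : 0 < ∑ l, B.repr β l :=
      Finset.sum_pos' hnn ⟨l, hl, h1⟩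
    linarith
  have : β = 0 := by
    rw [sum_repr_eq B hB β]
    exact Finset.sum_eq_zero (fun l hl => by rw [hall l hl, zero_smul])
  exact hΦ.nonzero (this ▸ hbase.pos_subset hβ)

/-- All positive roots have the same squared norm (simply-laced case). -/
lemma norm_of_pos (hΦ : IsRootSystem Φ) (hbase : IsBase Φ αs Pos)
    (B : Module.Basis (Fin n) ℝ V) (hB : ∀ j, B j = αs j) {i0 : Fin n}
    (hsim : ∀ j, ⟪αs j, αs j⟫ = ⟪αs i0, αs i0⟫) :
    ∀ k : ℕ, ∀ β ∈ Pos, (∑ l, B.repr β l) ≤ (k:ℝ) → ⟪β, β⟫ = ⟪αs i0, αs i0⟫ := by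
  intro k
  induction k with
  | zero =>
    intro β hβ hle
    exact absurd (le_trans hle (by norm_num)) (base_nonzero_height hΦ hbase B hB hβ)
  | succ k ih =>
    intro β hβ hle
    obtain ⟨j, _, hj2⟩ := exists_pos_inner hΦ hbase B hB hβ
    rcases descent hΦ hbase B hB hβ j hj2 with heq | ⟨hpos, _, hsum⟩
    · rw [heq]; exact hsim j
    · have h1 : (∑ l, B.repr (sref (αs j) β) l) ≤ (k:ℝ) := by
        push_cast at hle ⊢; linarith
      have h2 := ih _ hpos h1
      have h3 := inner_sref (αs j) β β
      rw [h2] at h3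
      exact h3.symm

/-- Reflections of roots in the span of the simple roots `≠ i0` lie in the parabolic. -/
lemma sub_refl_mem (hΦ : IsRootSystem Φ) (hbase : IsBase Φ αs Pos)
    (B : Module.Basis (Fin n) ℝ V) (hB : ∀ j, B j = αs j) (i0 : Fin n) :
    ∀ k : ℕ, ∀ β ∈ Pos, (∑ l, B.repr β l) ≤ (k:ℝ) → B.repr β i0 = 0 →
      sref β ∈ parab αs {j | j ≠ i0} := by
  intro k
  induction k with
  | zero =>
    intro β hβ hle _
    exact absurd (le_trans hle (by norm_num)) (base_nonzero_height hΦ hbase B hB hβ)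
  | succ k ih =>
    intro β hβ hle hi0
    obtain ⟨j, hj1, hj2⟩ := exists_pos_inner hΦ hbase B hB hβ
    have hjne : j ≠ i0 := fun h => by rw [h, hi0] at hj1; exact lt_irrefl _ hj1
    rcases descent hΦ hbase B hB hβ j hj2 with heq | ⟨hpos, hoth, hsum⟩
    · rw [heq]
      exact Subgroup.subset_closure ⟨j, hjne, rfl⟩
    · have h1 : (∑ l, B.repr (sref (αs j) β) l) ≤ (k:ℝ) := by
        push_cast at hle ⊢; linarith
      have h2 : B.repr (sref (αs j) β) i0 = 0 := by
        rw [hoth i0 (Ne.symm hjne)]; exact hi0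
      have h3 := ih _ hpos h1 h2
      have hj_mem : sref (αs j) ∈ parab αs {j | j ≠ i0} :=
        Subgroup.subset_closure ⟨j, hjne, rfl⟩
      have hβeq : β = sref (αs j) (sref (αs j) β) := (sref_sref _ _).symm
      have : sref β = sref (αs j) * sref (sref (αs j) β) * (sref (αs j))⁻¹ := by
        nth_rw 1 [hβeq]
        exact sref_conj (sref (αs j)) (inner_sref (αs j)) _
      rw [this]
      exact mul_mem (mul_mem hj_mem h3) (inv_mem hj_mem)


lemma orbit_lemma (hΦ : IsRootSystem Φ) (hbase : IsBase Φ αs Pos)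
    (B : Module.Basis (Fin n) ℝ V) (hB : ∀ j, B j = αs j) {i0 : Fin n}
    (hsim : ∀ j, ⟪αs j, αs j⟫ = ⟪αs i0, αs i0⟫)
    (hkey : ∀ c d : Fin n → ℝ,
      (∀ l, d l = ∑ k, c k * cartanE ((k:ℕ)+1) ((l:ℕ)+1)) →
      (∀ j, j ≠ i0 → d j ≤ 0) → (∀ k, 0 ≤ c k) → 2 * c i0 ≤ 3 * d i0)
    (hE : CartanIs αs cartanE) :
    ∀ k : ℕ, ∀ β ∈ Pos, (∑ l, B.repr β l) ≤ (k:ℝ) → 1 ≤ B.repr β i0 →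
      ∃ w ∈ parab αs {j | j ≠ i0}, β = w (αs i0) := by
  intro k
  induction k with
  | zero =>
    intro β hβ hle _
    exact absurd (le_trans hle (by norm_num)) (base_nonzero_height hΦ hbase B hB hβ)
  | succ k ih =>
    intro β hβ hle hc1
    by_cases hex : ∃ j, j ≠ i0 ∧ 0 < ⟪β, αs j⟫
    · obtain ⟨j, hjne, hj⟩ := hex
      rcases descent hΦ hbase B hB hβ j hj with heq | ⟨hpos, hoth, hsum⟩
      · exfalso
        have h0 : B.repr β i0 = 0 := by
          rw [heq, ← hB j, B.repr_self]
          simp [Finsupp.single_apply, hjne]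
        linarith
      · have h1 : (∑ l, B.repr (sref (αs j) β) l) ≤ (k:ℝ) := by
          push_cast at hle ⊢; linarith
        have h2 : 1 ≤ B.repr (sref (αs j) β) i0 := by
          rw [hoth i0 (Ne.symm hjne)]; exact hc1
        obtain ⟨w, hw, hweq⟩ := ih _ hpos h1 h2
        refine ⟨sref (αs j) * w, mul_mem (Subgroup.subset_closure ⟨j, hjne, rfl⟩) hw, ?_⟩
        show β = sref (αs j) (w (αs i0))
        rw [← hweq]
        exact (sref_sref _ _).symm
    · push_neg at hex
      have hβΦ := hbase.pos_subset hβ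
      have hβ0 : β ≠ 0 := fun h => hΦ.nonzero (h ▸ hβΦ)
      have hαi0 : αs i0 ≠ 0 := fun h => hΦ.nonzero (h ▸ hbase.mem i0)
      have hN : (0:ℝ) < ⟪αs i0, αs i0⟫ := inner_self_pos' hαi0
      have hnormβ : ⟪β, β⟫ = ⟪αs i0, αs i0⟫ :=
        norm_of_pos hΦ hbase B hB hsim (k+1) β hβ (by exact_mod_cast hle)
      set c : Fin n → ℝ := fun l => B.repr β l with hcdef
      set d : Fin n → ℝ := fun l => 2 * ⟪β, αs l⟫ / ⟪αs l, αs l⟫ with hddef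
      have hda : ∀ l, d l = ∑ kk, c kk * cartanE ((kk:ℕ)+1) ((l:ℕ)+1) := by
        intro l
        have hinner : ⟪β, αs l⟫ = ∑ kk, c kk * ⟪αs kk, αs l⟫ := by
          nth_rw 1 [sum_repr_eq B hB β]
          rw [sum_inner]
          simp_rw [real_inner_smul_left]
          rfl
        rw [hddef]
        simp only
        rw [hinner, Finset.mul_sum, Finset.sum_div]
        refine Finset.sum_congr rfl (fun kk _ => ?_)
        rw [← hE kk l]
        ring
      have hdb : ∀ j, j ≠ i0 → d j ≤ 0 := by
        intro j hj
        have h1 := hex j hj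
        have h2 : 0 < ⟪αs j, αs j⟫ := by rw [hsim j]; exact hN
        exact div_nonpos_of_nonpos_of_nonneg (by linarith) (le_of_lt h2)
      have hcnn : ∀ kk, 0 ≤ c kk := fun kk => repr_pos_nonneg hbase B hB hβ kk
      have hkey2 := hkey c d hda hdb hcnn
      have hci0 : 1 ≤ c i0 := hc1
      obtain ⟨m, hm⟩ := hΦ.crystallographic β hβΦ (αs i0) (hbase.mem i0)
      have hdm : d i0 = (m:ℝ) := hm
      have hm1 : (1:ℤ) ≤ m := by
        have h23 : (2:ℝ)/3 ≤ (m:ℝ) := by rw [← hdm]; linarith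
        have : (0:ℤ) < m := by exact_mod_cast lt_of_lt_of_le (by norm_num : (0:ℝ) < 2/3) h23
        omega
      have hnb : ‖β‖ * ‖β‖ = ⟪αs i0, αs i0⟫ := by
        rw [← real_inner_self_eq_norm_mul_norm]; exact hnormβ
      have hna : ‖αs i0‖ * ‖αs i0‖ = ⟪αs i0, αs i0⟫ := by
        rw [← real_inner_self_eq_norm_mul_norm]
      have hnorm_eq : ‖β‖ = ‖αs i0‖ := by
        rcases mul_self_eq_mul_self_iff.mp (hnb.trans hna.symm) with h | h
        · exact h
        · have h1 := norm_nonneg β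
          have h2 := norm_nonneg (αs i0)
          have h3 : ‖β‖ = 0 := by linarith [h ▸ h1]
          rw [h3] at h ⊢
          linarith
      have hCS : ⟪β, αs i0⟫ ≤ ⟪αs i0, αs i0⟫ := by
        have := real_inner_le_norm β (αs i0)
        rw [hnorm_eq, hna] at this
        exact this
      have hd2 : d i0 ≤ 2 := by
        rw [hddef]
        simp only
        rw [div_le_iff₀ hN]
        linarith
      have hm2 : m ≤ 2 := by exact_mod_cast hdm ▸ hd2
      have hsum2 : (∑ l, c l * d l) = 2 := by
        have hterm : ∀ l, c l * d l = 2 * (c l * ⟪β, αs l⟫) / ⟪αs i0, αs i0⟫ := by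
          intro l
          rw [hddef]
          simp only
          rw [hsim l]
          ring
        rw [Finset.sum_congr rfl (fun l _ => hterm l), ← Finset.sum_div, ← Finset.mul_sum]
        have hs : (∑ l, c l * ⟪β, αs l⟫) = ⟪β, β⟫ := by
          nth_rw 2 [sum_repr_eq B hB β]
          rw [sum_inner]
          simp_rw [real_inner_smul_left]
          exact Finset.sum_congr rfl (fun l _ => by rw [real_inner_comm])
        rw [hs, hnormβ]
        field_simp
      interval_cases m
      · -- d i0 = 1, derive contradiction
        exfalso
        have hd1 : d i0 = 1 := by rw [hdm]; norm_num
        have hsplit : c i0 * d i0 + (∑ l ∈ Finset.univ.erase i0, c l * d l) = 2 := by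
          rw [← hsum2]
          exact Finset.add_sum_erase Finset.univ (fun l => c l * d l) (Finset.mem_univ i0)
        have hrest : (∑ l ∈ Finset.univ.erase i0, c l * d l) ≤ 0 :=
          Finset.sum_nonpos (fun l hl =>
            mul_nonpos_of_nonneg_of_nonpos (hcnn l) (hdb l (Finset.ne_of_mem_erase hl)))
        have hcd : c i0 * d i0 = c i0 := by rw [hd1]; ring
        linarith
      · -- d i0 = 2, so β = αs i0
        have hinner2 : ⟪β, αs i0⟫ = ⟪αs i0, αs i0⟫ := by
          have : d i0 = 2 := by rw [hdm]; norm_num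
          rw [hddef] at this
          simp only at this
          rw [div_eq_iff (ne_of_gt hN)] at this
          linarith
        have heqq : ‖αs i0‖ • β = ‖β‖ • αs i0 :=
          inner_eq_norm_mul_iff_real.mp (by rw [hinner2, hnorm_eq, hna])
        rw [hnorm_eq] at heqq
        have hβeq : β = αs i0 :=
          smul_right_injective V (norm_ne_zero_iff.mpr hαi0) heqq
        exact ⟨1, one_mem _, by rw [hβeq]; rfl⟩

lemma adj_eq {n : ℕ} {αs : Fin n → V} (hα : ∀ j, αs j ≠ 0) {j k : Fin n}
    (h1 : 2 * ⟪αs j, αs k⟫ / ⟪αs k, αs k⟫ = -1)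
    (h2 : 2 * ⟪αs k, αs j⟫ / ⟪αs j, αs j⟫ = -1) :
    ⟪αs j, αs j⟫ = ⟪αs k, αs k⟫ := by
  have hj := inner_self_pos' (hα j)
  have hk := inner_self_pos' (hα k)
  rw [div_eq_iff (ne_of_gt hk)] at h1
  rw [div_eq_iff (ne_of_gt hj)] at h2
  have hcomm := real_inner_comm (αs j) (αs k)
  linarith

lemma hsim6 {αs : Fin 6 → V} (hα : ∀ j, αs j ≠ 0) (hE : CartanIs αs cartanE) :
    ∀ j, ⟪αs j, αs j⟫ = ⟪αs (0 : Fin 6), αs (0 : Fin 6)⟫ := by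
  have Ejk : ∀ j k : Fin 6, cartanE ((j:ℕ)+1) ((k:ℕ)+1) = -1 →
      cartanE ((k:ℕ)+1) ((j:ℕ)+1) = -1 → ⟪αs j, αs j⟫ = ⟪αs k, αs k⟫ := by
    intro j k h1 h2
    exact adj_eq hα ((hE j k).trans h1) ((hE k j).trans h2)
  have h02 := Ejk 0 2 (by norm_num [cartanE, eAdj, show ((0:Fin 6):ℕ) = 0 from rfl, show ((1:Fin 6):ℕ) = 1 from rfl, show ((2:Fin 6):ℕ) = 2 from rfl, show ((3:Fin 6):ℕ) = 3 from rfl, show ((4:Fin 6):ℕ) = 4 from rfl, show ((5:Fin 6):ℕ) = 5 from rfl]) (by norm_num [cartanE, eAdj, show ((0:Fin 6):ℕ) = 0 from rfl, show ((1:Fin 6):ℕ) = 1 from rfl, show ((2:Fin 6):ℕ) = 2 from rfl, show ((3:Fin 6):ℕ) = 3 from rfl, show ((4:Fin 6):ℕ) = 4 from rfl, show ((5:Fin 6):ℕ) = 5 from rfl])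
  have h13 := Ejk 1 3 (by norm_num [cartanE, eAdj, show ((0:Fin 6):ℕ) = 0 from rfl, show ((1:Fin 6):ℕ) = 1 from rfl, show ((2:Fin 6):ℕ) = 2 from rfl, show ((3:Fin 6):ℕ) = 3 from rfl, show ((4:Fin 6):ℕ) = 4 from rfl, show ((5:Fin 6):ℕ) = 5 from rfl]) (by norm_num [cartanE, eAdj, show ((0:Fin 6):ℕ) = 0 from rfl, show ((1:Fin 6):ℕ) = 1 from rfl, show ((2:Fin 6):ℕ) = 2 from rfl, show ((3:Fin 6):ℕ) = 3 from rfl, show ((4:Fin 6):ℕ) = 4 from rfl, show ((5:Fin 6):ℕ) = 5 from rfl])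
  have h23 := Ejk 2 3 (by norm_num [cartanE, eAdj, show ((0:Fin 6):ℕ) = 0 from rfl, show ((1:Fin 6):ℕ) = 1 from rfl, show ((2:Fin 6):ℕ) = 2 from rfl, show ((3:Fin 6):ℕ) = 3 from rfl, show ((4:Fin 6):ℕ) = 4 from rfl, show ((5:Fin 6):ℕ) = 5 from rfl]) (by norm_num [cartanE, eAdj, show ((0:Fin 6):ℕ) = 0 from rfl, show ((1:Fin 6):ℕ) = 1 from rfl, show ((2:Fin 6):ℕ) = 2 from rfl, show ((3:Fin 6):ℕ) = 3 from rfl, show ((4:Fin 6):ℕ) = 4 from rfl, show ((5:Fin 6):ℕ) = 5 from rfl])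
  have h34 := Ejk 3 4 (by norm_num [cartanE, eAdj, show ((0:Fin 6):ℕ) = 0 from rfl, show ((1:Fin 6):ℕ) = 1 from rfl, show ((2:Fin 6):ℕ) = 2 from rfl, show ((3:Fin 6):ℕ) = 3 from rfl, show ((4:Fin 6):ℕ) = 4 from rfl, show ((5:Fin 6):ℕ) = 5 from rfl]) (by norm_num [cartanE, eAdj, show ((0:Fin 6):ℕ) = 0 from rfl, show ((1:Fin 6):ℕ) = 1 from rfl, show ((2:Fin 6):ℕ) = 2 from rfl, show ((3:Fin 6):ℕ) = 3 from rfl, show ((4:Fin 6):ℕ) = 4 from rfl, show ((5:Fin 6):ℕ) = 5 from rfl])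
  have h45 := Ejk 4 5 (by norm_num [cartanE, eAdj, show ((0:Fin 6):ℕ) = 0 from rfl, show ((1:Fin 6):ℕ) = 1 from rfl, show ((2:Fin 6):ℕ) = 2 from rfl, show ((3:Fin 6):ℕ) = 3 from rfl, show ((4:Fin 6):ℕ) = 4 from rfl, show ((5:Fin 6):ℕ) = 5 from rfl]) (by norm_num [cartanE, eAdj, show ((0:Fin 6):ℕ) = 0 from rfl, show ((1:Fin 6):ℕ) = 1 from rfl, show ((2:Fin 6):ℕ) = 2 from rfl, show ((3:Fin 6):ℕ) = 3 from rfl, show ((4:Fin 6):ℕ) = 4 from rfl, show ((5:Fin 6):ℕ) = 5 from rfl])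
  intro j
  fin_cases j
  · rfl
  · exact h13.trans (h23.symm.trans h02.symm)
  · exact h02.symm
  · exact h23.symm.trans h02.symm
  · exact h34.symm.trans (h23.symm.trans h02.symm)
  · exact h45.symm.trans (h34.symm.trans (h23.symm.trans h02.symm))

lemma hsim7 {αs : Fin 7 → V} (hα : ∀ j, αs j ≠ 0) (hE : CartanIs αs cartanE) :
    ∀ j, ⟪αs j, αs j⟫ = ⟪αs (6 : Fin 7), αs (6 : Fin 7)⟫ := by
  have Ejk : ∀ j k : Fin 7, cartanE ((j:ℕ)+1) ((k:ℕ)+1) = -1 →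
      cartanE ((k:ℕ)+1) ((j:ℕ)+1) = -1 → ⟪αs j, αs j⟫ = ⟪αs k, αs k⟫ := by
    intro j k h1 h2
    exact adj_eq hα ((hE j k).trans h1) ((hE k j).trans h2)
  have h02 := Ejk 0 2 (by norm_num [cartanE, eAdj, show ((0:Fin 7):ℕ) = 0 from rfl, show ((1:Fin 7):ℕ) = 1 from rfl, show ((2:Fin 7):ℕ) = 2 from rfl, show ((3:Fin 7):ℕ) = 3 from rfl, show ((4:Fin 7):ℕ) = 4 from rfl, show ((5:Fin 7):ℕ) = 5 from rfl, show ((6:Fin 7):ℕ) = 6 from rfl]) (by norm_num [cartanE, eAdj, show ((0:Fin 7):ℕ) = 0 from rfl, show ((1:Fin 7):ℕ) = 1 from rfl, show ((2:Fin 7):ℕ) = 2 from rfl, show ((3:Fin 7):ℕ) = 3 from rfl, show ((4:Fin 7):ℕ) = 4 from rfl, show ((5:Fin 7):ℕ) = 5 from rfl, show ((6:Fin 7):ℕ) = 6 from rfl])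
  have h13 := Ejk 1 3 (by norm_num [cartanE, eAdj, show ((0:Fin 7):ℕ) = 0 from rfl, show ((1:Fin 7):ℕ) = 1 from rfl, show ((2:Fin 7):ℕ) = 2 from rfl, show ((3:Fin 7):ℕ) = 3 from rfl, show ((4:Fin 7):ℕ) = 4 from rfl, show ((5:Fin 7):ℕ) = 5 from rfl, show ((6:Fin 7):ℕ) = 6 from rfl]) (by norm_num [cartanE, eAdj, show ((0:Fin 7):ℕ) = 0 from rfl, show ((1:Fin 7):ℕ) = 1 from rfl, show ((2:Fin 7):ℕ) = 2 from rfl, show ((3:Fin 7):ℕ) = 3 from rfl, show ((4:Fin 7):ℕ) = 4 from rfl, show ((5:Fin 7):ℕ) = 5 from rfl, show ((6:Fin 7):ℕ) = 6 from rfl])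
  have h23 := Ejk 2 3 (by norm_num [cartanE, eAdj, show ((0:Fin 7):ℕ) = 0 from rfl, show ((1:Fin 7):ℕ) = 1 from rfl, show ((2:Fin 7):ℕ) = 2 from rfl, show ((3:Fin 7):ℕ) = 3 from rfl, show ((4:Fin 7):ℕ) = 4 from rfl, show ((5:Fin 7):ℕ) = 5 from rfl, show ((6:Fin 7):ℕ) = 6 from rfl]) (by norm_num [cartanE, eAdj, show ((0:Fin 7):ℕ) = 0 from rfl, show ((1:Fin 7):ℕ) = 1 from rfl, show ((2:Fin 7):ℕ) = 2 from rfl, show ((3:Fin 7):ℕ) = 3 from rfl, show ((4:Fin 7):ℕ) = 4 from rfl, show ((5:Fin 7):ℕ) = 5 from rfl, show ((6:Fin 7):ℕ) = 6 from rfl])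
  have h34 := Ejk 3 4 (by norm_num [cartanE, eAdj, show ((0:Fin 7):ℕ) = 0 from rfl, show ((1:Fin 7):ℕ) = 1 from rfl, show ((2:Fin 7):ℕ) = 2 from rfl, show ((3:Fin 7):ℕ) = 3 from rfl, show ((4:Fin 7):ℕ) = 4 from rfl, show ((5:Fin 7):ℕ) = 5 from rfl, show ((6:Fin 7):ℕ) = 6 from rfl]) (by norm_num [cartanE, eAdj, show ((0:Fin 7):ℕ) = 0 from rfl, show ((1:Fin 7):ℕ) = 1 from rfl, show ((2:Fin 7):ℕ) = 2 from rfl, show ((3:Fin 7):ℕ) = 3 from rfl, show ((4:Fin 7):ℕ) = 4 from rfl, show ((5:Fin 7):ℕ) = 5 from rfl, show ((6:Fin 7):ℕ) = 6 from rfl])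
  have h45 := Ejk 4 5 (by norm_num [cartanE, eAdj, show ((0:Fin 7):ℕ) = 0 from rfl, show ((1:Fin 7):ℕ) = 1 from rfl, show ((2:Fin 7):ℕ) = 2 from rfl, show ((3:Fin 7):ℕ) = 3 from rfl, show ((4:Fin 7):ℕ) = 4 from rfl, show ((5:Fin 7):ℕ) = 5 from rfl, show ((6:Fin 7):ℕ) = 6 from rfl]) (by norm_num [cartanE, eAdj, show ((0:Fin 7):ℕ) = 0 from rfl, show ((1:Fin 7):ℕ) = 1 from rfl, show ((2:Fin 7):ℕ) = 2 from rfl, show ((3:Fin 7):ℕ) = 3 from rfl, show ((4:Fin 7):ℕ) = 4 from rfl, show ((5:Fin 7):ℕ) = 5 from rfl, show ((6:Fin 7):ℕ) = 6 from rfl])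
  have h56 := Ejk 5 6 (by norm_num [cartanE, eAdj, show ((0:Fin 7):ℕ) = 0 from rfl, show ((1:Fin 7):ℕ) = 1 from rfl, show ((2:Fin 7):ℕ) = 2 from rfl, show ((3:Fin 7):ℕ) = 3 from rfl, show ((4:Fin 7):ℕ) = 4 from rfl, show ((5:Fin 7):ℕ) = 5 from rfl, show ((6:Fin 7):ℕ) = 6 from rfl]) (by norm_num [cartanE, eAdj, show ((0:Fin 7):ℕ) = 0 from rfl, show ((1:Fin 7):ℕ) = 1 from rfl, show ((2:Fin 7):ℕ) = 2 from rfl, show ((3:Fin 7):ℕ) = 3 from rfl, show ((4:Fin 7):ℕ) = 4 from rfl, show ((5:Fin 7):ℕ) = 5 from rfl, show ((6:Fin 7):ℕ) = 6 from rfl])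
  intro j
  fin_cases j
  · exact h02.trans (h23.trans (h34.trans (h45.trans h56)))
  · exact h13.trans (h34.trans (h45.trans h56))
  · exact h23.trans (h34.trans (h45.trans h56))
  · exact h34.trans (h45.trans h56)
  · exact h45.trans h56
  · exact h56
  · rfl

lemma hkey6 (c d : Fin 6 → ℝ)
    (hda : ∀ l, d l = ∑ k, c k * cartanE ((k:ℕ)+1) ((l:ℕ)+1))
    (hdb : ∀ j, j ≠ (0 : Fin 6) → d j ≤ 0) (hcnn : ∀ k, 0 ≤ c k) :
    2 * c 0 ≤ 3 * d 0 := by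
  have e0 := hda 0
  have e1 := hda 1
  have e2 := hda 2
  have e3 := hda 3
  have e4 := hda 4
  have e5 := hda 5
  simp only [Fin.sum_univ_six, cartanE, eAdj] at e0 e1 e2 e3 e4 e5
  norm_num [show ((0:Fin 6):ℕ) = 0 from rfl, show ((1:Fin 6):ℕ) = 1 from rfl, show ((2:Fin 6):ℕ) = 2 from rfl, show ((3:Fin 6):ℕ) = 3 from rfl, show ((4:Fin 6):ℕ) = 4 from rfl, show ((5:Fin 6):ℕ) = 5 from rfl] at e0 e1 e2 e3 e4 e5
  have b1 := hdb 1 (by decide)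
  have b2 := hdb 2 (by decide)
  have b3 := hdb 3 (by decide)
  have b4 := hdb 4 (by decide)
  have b5 := hdb 5 (by decide)
  have n0 := hcnn 0
  have n1 := hcnn 1
  have n2 := hcnn 2
  have n3 := hcnn 3
  have n4 := hcnn 4
  have n5 := hcnn 5
  linarith

lemma hkey7 (c d : Fin 7 → ℝ)
    (hda : ∀ l, d l = ∑ k, c k * cartanE ((k:ℕ)+1) ((l:ℕ)+1))
    (hdb : ∀ j, j ≠ (6 : Fin 7) → d j ≤ 0) (hcnn : ∀ k, 0 ≤ c k) :
    2 * c 6 ≤ 3 * d 6 := by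
  have e0 := hda 0
  have e1 := hda 1
  have e2 := hda 2
  have e3 := hda 3
  have e4 := hda 4
  have e5 := hda 5
  have e6 := hda 6
  simp only [Fin.sum_univ_seven, cartanE, eAdj] at e0 e1 e2 e3 e4 e5 e6
  norm_num [show ((0:Fin 7):ℕ) = 0 from rfl, show ((1:Fin 7):ℕ) = 1 from rfl, show ((2:Fin 7):ℕ) = 2 from rfl, show ((3:Fin 7):ℕ) = 3 from rfl, show ((4:Fin 7):ℕ) = 4 from rfl, show ((5:Fin 7):ℕ) = 5 from rfl, show ((6:Fin 7):ℕ) = 6 from rfl] at e0 e1 e2 e3 e4 e5 e6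
  have b0 := hdb 0 (by decide)
  have b1 := hdb 1 (by decide)
  have b2 := hdb 2 (by decide)
  have b3 := hdb 3 (by decide)
  have b4 := hdb 4 (by decide)
  have b5 := hdb 5 (by decide)
  have n0 := hcnn 0
  have n1 := hcnn 1
  have n2 := hcnn 2
  have n3 := hcnn 3
  have n4 := hcnn 4
  have n5 := hcnn 5
  have n6 := hcnn 6
  linarith

lemma final_lemma (hΦ : IsRootSystem Φ) (hbase : IsBase Φ αs Pos)
    (hE : CartanIs αs cartanE) (i0 : Fin n)
    (B : Module.Basis (Fin n) ℝ V) (hB : ∀ j, B j = αs j)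
    (hsim : ∀ j, ⟪αs j, αs j⟫ = ⟪αs i0, αs i0⟫)
    (hkey : ∀ c d : Fin n → ℝ,
      (∀ l, d l = ∑ k, c k * cartanE ((k:ℕ)+1) ((l:ℕ)+1)) →
      (∀ j, j ≠ i0 → d j ≤ 0) → (∀ k, 0 ≤ c k) → 2 * c i0 ≤ 3 * d i0)
    (a : V) (ha : a ∈ Φ) :
    sref a ∈ parab αs {j | j ≠ i0} ∨
      ∃ u ∈ parab αs {j | j ≠ i0}, ∃ v ∈ parab αs {j | j ≠ i0},
        sref a = u * sref (αs i0) * v := by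
  suffices h : ∀ b, b ∈ Pos → (sref b ∈ parab αs {j | j ≠ i0} ∨
      ∃ u ∈ parab αs {j | j ≠ i0}, ∃ v ∈ parab αs {j | j ≠ i0},
        sref b = u * sref (αs i0) * v) by
    rcases hbase.pos_or_neg a ha with hp | hp
    · exact h a hp
    · have h2 := h (-a) hp
      rw [sref_neg] at h2
      exact h2
  intro b hb
  obtain ⟨c, hc⟩ := repr_pos_nat hbase B hB hb
  have hht : (∑ l, B.repr b l) ≤ (((∑ l, c l) : ℕ) : ℝ) := by
    rw [Finset.sum_congr rfl (fun l _ => hc l)]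
    push_cast
    exact le_rfl
  rcases Nat.eq_zero_or_pos (c i0) with h0 | h1
  · exact Or.inl (sub_refl_mem hΦ hbase B hB i0 (∑ l, c l) b hb hht
      (by rw [hc i0, h0]; norm_num))
  · have hco : 1 ≤ B.repr b i0 := by rw [hc i0]; exact_mod_cast h1
    obtain ⟨w, hw, hweq⟩ := orbit_lemma hΦ hbase B hB hsim hkey hE (∑ l, c l) b hb hht hco
    exact Or.inr ⟨w, hw, w⁻¹, inv_mem hw,
      by rw [hweq]; exact sref_conj w (parab_inner αs _ hw) (αs i0)⟩

end Main

theorem statement5 {n : ℕ} (Φ : Set V) (hΦ : IsRootSystem Φ)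
    (αs : Fin n → V) (Pos : Set V) (hbase : IsBase Φ αs Pos)
    (hE : CartanIs αs cartanE) (i0 : Fin n)
    (hcase : (n = 6 ∧ (i0 : ℕ) = 0) ∨ (n = 7 ∧ (i0 : ℕ) = 6))
    (a : V) (ha : a ∈ Φ) :
    sref a ∈ parab αs {j | j ≠ i0} ∨
      ∃ u ∈ parab αs {j | j ≠ i0}, ∃ v ∈ parab αs {j | j ≠ i0},
        sref a = u * sref (αs i0) * v := by
  have hα : ∀ j, αs j ≠ 0 := fun j h => hΦ.nonzero (h ▸ hbase.mem j)
  rcases hcase with ⟨hn, hi⟩ | ⟨hn, hi⟩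
  · subst hn
    have hi0 : i0 = (0 : Fin 6) := Fin.ext (by rw [hi]; rfl)
    subst hi0
    let B : Module.Basis (Fin 6) ℝ V := Module.Basis.mk hbase.indep hbase.span_eq.ge
    have hB : ∀ j, B j = αs j := fun j => Module.Basis.mk_apply _ _ j
    exact final_lemma hΦ hbase hE (0 : Fin 6) B hB (hsim6 hα hE) (hkey6) a ha
  · subst hn
    have hi0 : i0 = (6 : Fin 7) := Fin.ext (by rw [hi]; rfl)
    subst hi0
    let B : Module.Basis (Fin 7) ℝ V := Module.Basis.mk hbase.indep hbase.span_eq.ge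
    have hB : ∀ j, B j = αs j := fun j => Module.Basis.mk_apply _ _ j
    exact final_lemma hΦ hbase hE (6 : Fin 7) B hB (hsim7 hα hE) (hkey7) a ha

end Paper
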